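/- Let X_u, V, V' be mutually independent random elements on a probability space, with V' distributed as V, let f be a measurable function and set Z = f(X_u, V) and Z' = f(X_u, V'). Let T be a measurable real-valued function with T(Z) square integrable. Then Var( E[T(Z) | X_u] ) = Cov( T(Z), T(Z') ), where E[·|X_u] denotes conditional expectation given the σ-algebra generated by X_u. -/

import Mathlib

/-!
Conditioning on `X_u` freezes the first argument: since `V` is independent of `X_u`,
`E[T(Z) | X_u] = g(X_u)` with `g x = E[T(f(x, V))]`. Since `V` and `V'` are independent copies,
independent of `X_u`, Fubini gives `E[T(Z) T(Z')] = E[g(X_u)²]`, and `(X_u, V)`, `(X_u, V')` have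
the same law, so `E[T(Z')] = E[T(Z)] = E[g(X_u)]`.
-/

open MeasureTheory ProbabilityTheory Filter

namespace ProbabilityTheory

variable {Ω α β : Type*} {mΩ : MeasurableSpace Ω} [MeasurableSpace α] [MeasurableSpace β]
  {μ : Measure Ω} [IsFiniteMeasure μ] {X : Ω → α} {Y Y' : Ω → β}

theorem IndepFun.map_prodMk_eq (hX : Measurable X) (hY : Measurable Y) (hXY : IndepFun X Y μ) :
    μ.map (fun ω => (X ω, Y ω)) = (μ.map X).prod (μ.map Y) :=
  (indepFun_iff_map_prod_eq_prod_map_map hX.aemeasurable hY.aemeasurable).mp hXY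

theorem IndepFun.identDistrib_prodMk (hX : Measurable X) (hY : Measurable Y)
    (hY' : Measurable Y') (hXY : IndepFun X Y μ) (hXY' : IndepFun X Y' μ) (hlaw : μ.map Y' = μ.map Y) :
    IdentDistrib (fun ω => (X ω, Y ω)) (fun ω => (X ω, Y' ω)) μ μ where
  aemeasurable_fst := (hX.prodMk hY).aemeasurable
  aemeasurable_snd := (hX.prodMk hY').aemeasurable
  map_eq := by rw [hXY.map_prodMk_eq hX hY, hXY'.map_prodMk_eq hX hY', hlaw]

section

variable {F : Type*} [NormedAddCommGroup F] {G : α × β → F}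

theorem IndepFun.integrable_prod_map_iff (hX : Measurable X) (hY : Measurable Y)
    (hXY : IndepFun X Y μ) (hG : StronglyMeasurable G) :
    Integrable G ((μ.map X).prod (μ.map Y)) ↔ Integrable (fun ω => G (X ω, Y ω)) μ := by
  rw [← hXY.map_prodMk_eq hX hY,
    integrable_map_measure hG.aestronglyMeasurable (hX.prodMk hY).aemeasurable]
  rfl

variable [NormedSpace ℝ F]

theorem IndepFun.integral_comp_prodMk (hX : Measurable X) (hY : Measurable Y)
    (hXY : IndepFun X Y μ) (hG : StronglyMeasurable G)
    (hint : Integrable (fun ω => G (X ω, Y ω)) μ) :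
    ∫ ω, G (X ω, Y ω) ∂μ = ∫ x, ∫ y, G (x, y) ∂μ.map Y ∂μ.map X := by
  rw [← integral_prod G ((hXY.integrable_prod_map_iff hX hY hG).mpr hint),
    ← hXY.map_prodMk_eq hX hY,
    integral_map (hX.prodMk hY).aemeasurable hG.aestronglyMeasurable]

theorem IndepFun.condExp_comp_prodMk [CompleteSpace F] (hX : Measurable X) (hY : Measurable Y)
    (hXY : IndepFun X Y μ) (hG : StronglyMeasurable G)
    (hint : Integrable (fun ω => G (X ω, Y ω)) μ) :
    μ[fun ω => G (X ω, Y ω) | MeasurableSpace.comap X inferInstance]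
      =ᵐ[μ] fun ω => ∫ y, G (X ω, y) ∂μ.map Y := by
  have hGint := (hXY.integrable_prod_map_iff hX hY hG).mpr hint
  have hg : StronglyMeasurable fun x => ∫ y, G (x, y) ∂μ.map Y := hG.integral_prod_right'
  have hgint : Integrable (fun ω => ∫ y, G (X ω, y) ∂μ.map Y) μ :=
    (integrable_map_measure hg.aestronglyMeasurable hX.aemeasurable).mp hGint.integral_prod_left
  refine (ae_eq_condExp_of_forall_setIntegral_eq hX.comap_le hint
    (fun s _ _ => hgint.integrableOn) ?_
    (hg.comp_measurable (comap_measurable X)).aestronglyMeasurable).symm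
  rintro _ ⟨A, hA, rfl⟩ -
  have hpre : (fun ω => (X ω, Y ω)) ⁻¹' (A ×ˢ Set.univ) = X ⁻¹' A := by ext; simp
  calc ∫ ω in X ⁻¹' A, ∫ y, G (X ω, y) ∂μ.map Y ∂μ
      = ∫ x in A, ∫ y, G (x, y) ∂μ.map Y ∂μ.map X :=
        (setIntegral_map hA hg.aestronglyMeasurable hX.aemeasurable).symm
    _ = ∫ p in A ×ˢ Set.univ, G p ∂(μ.map X).prod (μ.map Y) := by
        rw [setIntegral_prod _ hGint.integrableOn, Measure.restrict_univ]
    _ = ∫ ω in X ⁻¹' A, G (X ω, Y ω) ∂μ := by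
        rw [← hXY.map_prodMk_eq hX hY,
          setIntegral_map (hA.prod MeasurableSet.univ) hG.aestronglyMeasurable
            (hX.prodMk hY).aemeasurable, hpre]

end

theorem integral_mul_comp_prodMk_eq_integral_sq {𝕜 : Type*} [RCLike 𝕜] (hX : Measurable X)
    (hY : Measurable Y) (hY' : Measurable Y') (hYY' : IndepFun Y Y' μ)
    (hXYY' : IndepFun X (fun ω => (Y ω, Y' ω)) μ) (hlaw : μ.map Y' = μ.map Y)
    {G : α × β → 𝕜} (hG : StronglyMeasurable G)
    (hint : Integrable (fun ω => G (X ω, Y ω) * G (X ω, Y' ω)) μ) :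
    ∫ ω, G (X ω, Y ω) * G (X ω, Y' ω) ∂μ = ∫ x, (∫ y, G (x, y) ∂μ.map Y) ^ 2 ∂μ.map X := by
  have hG₂ : StronglyMeasurable fun p : α × β × β => G (p.1, p.2.1) * G (p.1, p.2.2) :=
    (hG.comp_measurable (measurable_fst.prodMk (measurable_fst.comp measurable_snd))).mul
      (hG.comp_measurable (measurable_fst.prodMk (measurable_snd.comp measurable_snd)))
  rw [hXYY'.integral_comp_prodMk hX (hY.prodMk hY') hG₂ hint, hYY'.map_prodMk_eq hY hY', hlaw]
  congr 1 with x
  rw [sq]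
  exact integral_prod_mul (fun y => G (x, y)) (fun y => G (x, y))

end ProbabilityTheory

/-- **The Pick-Freeze identity** `Var(E[T(Z) | X_u]) = Cov(T(Z), T(Z'))`.
Here `X_u`, `V`, `V'` are mutually independent (equivalently: `V` and `V'` are
independent, and `X_u` is independent of the pair `(V, V')`), `V'` has the same
distribution as `V`, `Z = f(X_u, V)` and `Z' = f(X_u, V')`, and the covariance is
written as `E[T(Z) T(Z')] − E[T(Z)] E[T(Z')]`. -/
theorem variance_condexp_eq_cov_pickfreeze
    {Ω α β 𝒳 : Type*} [MeasurableSpace Ω] [MeasurableSpace α] [MeasurableSpace β]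
    [MeasurableSpace 𝒳]
    (μ : Measure Ω) [IsProbabilityMeasure μ]
    (Xu : Ω → α) (V V' : Ω → β)
    (hXu : Measurable Xu) (hV : Measurable V) (hV' : Measurable V')
    (hVV' : IndepFun V V' μ)
    (hXuVV' : IndepFun Xu (fun ω => (V ω, V' ω)) μ)
    (hcopy : μ.map V' = μ.map V)
    (f : α × β → 𝒳) (hf : Measurable f)
    (T : 𝒳 → ℝ) (hT : Measurable T)
    (Z Z' : Ω → 𝒳)
    (hZ : Z = fun ω => f (Xu ω, V ω)) (hZ' : Z' = fun ω => f (Xu ω, V' ω))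
    (hL2 : MemLp (fun ω => T (Z ω)) 2 μ) :
    variance (μ[fun ω => T (Z ω) | MeasurableSpace.comap Xu inferInstance]) μ =
      (∫ ω, T (Z ω) * T (Z' ω) ∂μ) -
        (∫ ω, T (Z ω) ∂μ) * (∫ ω, T (Z' ω) ∂μ) := by
  subst hZ hZ'
  beta_reduce at hL2 ⊢
  have hG : Measurable fun p => T (f p) := hT.comp hf
  have hXuV : IndepFun Xu V μ := hXuVV'.comp measurable_id measurable_fst
  have hXuV' : IndepFun Xu V' μ := hXuVV'.comp measurable_id measurable_snd
  have hsame :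
      IdentDistrib (fun ω => T (f (Xu ω, V ω))) (fun ω => T (f (Xu ω, V' ω))) μ μ :=
    (hXuV.identDistrib_prodMk hXu hV hV' hXuV' hcopy).comp hG
  have hL2' := hsame.memLp_iff.mp hL2
  have hce := hXuV.condExp_comp_prodMk hXu hV hG.stronglyMeasurable (hL2.integrable one_le_two)
  have hg : Measurable fun x => ∫ v, T (f (x, v)) ∂μ.map V :=
    hG.stronglyMeasurable.integral_prod_right'.measurable
  have hsecond : μ[μ[fun ω => T (f (Xu ω, V ω)) | MeasurableSpace.comap Xu inferInstance] ^ 2]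
      = ∫ ω, T (f (Xu ω, V ω)) * T (f (Xu ω, V' ω)) ∂μ := by
    rw [integral_mul_comp_prodMk_eq_integral_sq hXu hV hV' hVV' hXuVV' hcopy
      hG.stronglyMeasurable (hL2.integrable_mul hL2'),
      integral_map hXu.aemeasurable (hg.pow_const 2).aestronglyMeasurable]
    exact integral_congr_ae (hce.pow_const 2)
  rw [variance_eq_sub (hL2.condExp one_le_two), hsecond, integral_condExp hXu.comap_le,
    ← hsame.integral_eq, sq]
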